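/- The number of root isthmic parts C_n of a uniform random rooted map with n edges converges in distribution to a geometric law of parameter 1/2 supported on {1, 2, 3, …}: for every integer k ≥ 1, lim_{n→∞} c_{n,k}/m(n) = 2^{−k}, and lim_{n→∞} c_{n,0}/m(n) = 0. -/

import Mathlib

/-!
Dividing the recurrences for `c_{n,k+1}` and `m(n)` by `(2n-1)!! = ∏_{j<n} (2j+1)` makes them
telescoping, so by Stolz–Cesàro `c_{n,k+1}/m(n)` has the limit of the ratio of the increments,
`∑_{i ≤ n} m(i) c_{n-i,k} / ∑_{i ≤ n} m(i) m(n-i)`. The inner terms of both convolutions are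
`O(m(n-1)) = o(m(n))`, so only the two end terms survive and the ratio tends to
`(ℓ_k + [k = 0]) / 2`, where `ℓ_k = lim c_{n,k}/m(n)`. Since `c_{n,0} = (2n-1)!! = o(m(n))`, this
gives `ℓ_0 = 0` and `ℓ_k = 2^{-k}` for `k ≥ 1`.
-/

open Polynomial Filter Finset Asymptotics Topology

theorem tendsto_div_of_tendsto_sub_div_sub {a b : ℕ → ℝ} {L : ℝ} (hb : StrictMono b)
    (hb_top : Tendsto b atTop atTop)
    (h : Tendsto (fun n ↦ (a (n + 1) - a n) / (b (n + 1) - b n)) atTop (𝓝 L)) :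
    Tendsto (fun n ↦ a n / b n) atTop (𝓝 L) := by
  have hΔb : ∀ n, 0 < b (n + 1) - b n := fun n ↦ sub_pos.2 (hb (lt_add_one n))
  have hΔ : (fun n ↦ a (n + 1) - a n - L * (b (n + 1) - b n)) =o[atTop]
      fun n ↦ b (n + 1) - b n := by
    rw [isLittleO_iff_tendsto fun n hn ↦ absurd hn (hΔb n).ne']
    refine (sub_self L ▸ h.sub_const L).congr fun n ↦ ?_
    field_simp [(hΔb n).ne']
  have hsum : (fun n ↦ a n - a 0 - L * (b n - b 0)) =o[atTop] fun n ↦ b n - b 0 := by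
    refine (hΔ.sum_range (fun n ↦ (hΔb n).le) ?_).congr (fun n ↦ ?_) (fun n ↦ sum_range_sub b n)
    · exact (tendsto_atTop_add_const_right _ (-b 0) hb_top).congr fun n ↦ by
        rw [sum_range_sub, sub_eq_add_neg]
    · rw [sum_sub_distrib, ← mul_sum, sum_range_sub, sum_range_sub]
  have hconst : ∀ c : ℝ, (fun _ : ℕ ↦ c) =o[atTop] b := fun c ↦
    isLittleO_const_left.2 <| Or.inr <| tendsto_norm_atTop_atTop.comp hb_top
  have hmain : (fun n ↦ a n - L * b n) =o[atTop] b :=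
    ((hsum.trans_isBigO ((isBigO_refl b atTop).sub (hconst (b 0)).isBigO)).add
      (hconst (a 0 - L * b 0))).congr_left fun n ↦ by ring
  refine (zero_add L ▸ hmain.tendsto_div_nhds_zero.add_const L).congr' ?_
  filter_upwards [hb_top.eventually_gt_atTop 0] with n hn
  field_simp
  ring

theorem tendsto_div_of_linear_recurrence {w x y α β : ℕ → ℝ} {L : ℝ} (hw : ∀ n, 0 < w n)
    (hx : ∀ n, x (n + 1) = w n * x n + α n) (hy : ∀ n, y (n + 1) = w n * y n + β n)
    (hβ : ∀ n, 0 < β n) (hy_top : Tendsto (fun n ↦ y n / ∏ j ∈ range n, w j) atTop atTop)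
    (h : Tendsto (fun n ↦ α n / β n) atTop (𝓝 L)) :
    Tendsto (fun n ↦ x n / y n) atTop (𝓝 L) := by
  set P : ℕ → ℝ := fun n ↦ ∏ j ∈ range n, w j
  have hP : ∀ n, 0 < P n := fun n ↦ prod_pos fun j _ ↦ hw j
  have hΔ : ∀ (z γ : ℕ → ℝ), (∀ n, z (n + 1) = w n * z n + γ n) →
      ∀ n, z (n + 1) / P (n + 1) - z n / P n = γ n / P (n + 1) := by
    intro z γ hz n
    have := hw n
    have := hP n
    rw [hz, show P (n + 1) = P n * w n from prod_range_succ w n]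
    field_simp
    ring
  have hmono : StrictMono fun n ↦ y n / P n := strictMono_nat_of_lt_succ fun n ↦ by
    have := hΔ y β hy n
    have := div_pos (hβ n) (hP (n + 1))
    linarith
  refine (tendsto_div_of_tendsto_sub_div_sub (a := fun n ↦ x n / P n) hmono hy_top
    (h.congr fun n ↦ ?_)).congr fun n ↦ ?_
  · rw [hΔ x α hx, hΔ y β hy, div_div_div_cancel_right₀ (hP (n + 1)).ne']
  · exact div_div_div_cancel_right₀ (hP n).ne' _ _

theorem Polynomial.coeff_le_eval_one {R : Type*} [Semiring R] [PartialOrder R]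
    [IsOrderedAddMonoid R] {p : R[X]} (hp : ∀ i, 0 ≤ p.coeff i) (k : ℕ) :
    p.coeff k ≤ p.eval 1 := by
  rw [eval_eq_sum_range]
  simp only [one_pow, mul_one]
  rcases le_or_gt k p.natDegree with hk | hk
  · exact single_le_sum (fun i _ ↦ hp i) (mem_range.2 (Nat.lt_succ_of_le hk))
  · rw [coeff_eq_zero_of_natDegree_lt hk]
    exact sum_nonneg fun i _ ↦ hp i

/-- `∑_{0 < i < n + 1} m i * m (n + 1 - i)`: the self-convolution of `m` at `n + 1` without its
two end terms. -/
def innerConv (m : ℕ → ℕ) (n : ℕ) : ℕ := ∑ i ∈ range n, m (i + 1) * m (n - i)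

/-- The weights `2 i + 5` average to `n + 4` under the symmetry `i ↦ n - 1 - i` of the terms. -/
theorem weighted_sum_eq_mul_innerConv (m : ℕ → ℕ) (n : ℕ) :
    ∑ i ∈ range n, (2 * i + 5) * (m (i + 1) * m (n - i)) = (n + 4) * innerConv m n := by
  have hrefl := sum_range_reflect (fun i ↦ (2 * i + 5) * (m (i + 1) * m (n - i))) n
  have hpair : ∑ i ∈ range n, ((2 * (n - 1 - i) + 5) * (m (n - 1 - i + 1) * m (n - (n - 1 - i)))
      + (2 * i + 5) * (m (i + 1) * m (n - i))) = (2 * n + 8) * innerConv m n := by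
    rw [innerConv, mul_sum]
    refine sum_congr rfl fun i hi ↦ ?_
    have hi := mem_range.1 hi
    rw [show n - 1 - i + 1 = n - i by omega, show n - (n - 1 - i) = i + 1 by omega,
      mul_comm (m (n - i)), ← add_mul, show 2 * (n - 1 - i) + 5 + (2 * i + 5) = 2 * n + 8 by omega]
  rw [sum_add_distrib, hrefl, show (2 * n + 8) * innerConv m n = 2 * ((n + 4) * innerConv m n) by
    ring] at hpair
  omega

theorem sum_innerConv_mul_le {m : ℕ → ℕ} {K n : ℕ} (h : ∀ i ≤ n, innerConv m i ≤ K * m i) :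
    ∑ i ∈ range (n + 1), innerConv m i * m (n + 1 - i) ≤ K * innerConv m n := by
  rw [sum_range_succ', show innerConv m 0 = 0 from rfl, zero_mul, add_zero]
  conv_rhs => rw [innerConv, mul_sum]
  refine sum_le_sum fun i hi ↦ ?_
  rw [show n + 1 - (i + 1) = n - i by omega, ← mul_assoc]
  exact Nat.mul_le_mul_right _ (h _ (mem_range.1 hi))

structure IsMapCount (m : ℕ → ℕ) : Prop where
  zero : m 0 = 1
  succ : ∀ n, m (n + 1) = (∑ k ∈ range (n + 1), m k * m (n - k)) + (2 * (n + 1) - 1) * m n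

namespace IsMapCount

variable {m : ℕ → ℕ} (hm : IsMapCount m)
include hm

theorem succ_succ (n : ℕ) : m (n + 2) = (2 * n + 5) * m (n + 1) + innerConv m n := by
  rw [hm.succ, sum_range_succ', sum_range_succ, hm.zero, innerConv]
  simp only [Nat.sub_zero, Nat.sub_self, hm.zero, show ∀ i, n + 1 - (i + 1) = n - i from
    fun i ↦ by omega]
  rw [show 2 * (n + 1 + 1) - 1 = 2 * n + 3 by omega]
  ring

theorem pos (n : ℕ) : 0 < m n := by
  induction n with
  | zero => simp [hm.zero]
  | succ n ih => rw [hm.succ]; exact Nat.add_pos_right _ (Nat.mul_pos (by omega) ih)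

theorem two_mul_add_one_mul_le (n : ℕ) : (2 * n + 1) * m n ≤ m (n + 1) := by
  rw [hm.succ, show 2 * (n + 1) - 1 = 2 * n + 1 by omega]
  exact Nat.le_add_left _ _

theorem two_mul_add_five_mul_le (n : ℕ) : (2 * n + 5) * m (n + 1) ≤ m (n + 2) :=
  hm.succ_succ n ▸ Nat.le_add_right _ _

theorem small_values : m 1 = 2 ∧ m 2 = 10 ∧ m 3 = 74 ∧ m 4 = 706 ∧ m 5 = 8162 := by
  have h1 : m 1 = 2 := by simpa [hm.zero] using hm.succ 0
  have h2 : m 2 = 10 := by simpa [sum_range_succ, hm.zero, h1] using hm.succ 1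
  have h3 : m 3 = 74 := by simpa [sum_range_succ, hm.zero, h1, h2] using hm.succ 2
  have h4 : m 4 = 706 := by simpa [sum_range_succ, hm.zero, h1, h2, h3] using hm.succ 3
  have h5 : m 5 = 8162 := by simpa [sum_range_succ, hm.zero, h1, h2, h3, h4] using hm.succ 4
  exact ⟨h1, h2, h3, h4, h5⟩

theorem innerConv_succ (n : ℕ) : innerConv m (n + 1) =
    2 * m (n + 1) + (n + 4) * innerConv m n + ∑ i ∈ range n, innerConv m i * m (n - i) := by
  rw [← weighted_sum_eq_mul_innerConv, add_assoc, ← sum_add_distrib, innerConv, sum_range_succ',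
    hm.small_values.1, Nat.sub_zero, add_comm]
  congr 1
  refine sum_congr rfl fun i _ ↦ ?_
  rw [show n + 1 - (i + 1) = n - i by omega, hm.succ_succ]
  ring

theorem innerConv_le (n : ℕ) : innerConv m n ≤ 10 * m n := by
  induction n using Nat.strong_induction_on with
  | _ n ih =>
    obtain ⟨h1, h2, h3, h4, h5⟩ := hm.small_values
    -- the inductive step below only closes from `n = 6` on
    rcases le_or_gt n 5 with hn | hn
    · interval_cases n <;> simp [innerConv, sum_range_succ, h1, h2, h3, h4, h5]
    obtain ⟨k, rfl⟩ : ∃ k, n = k + 6 := ⟨n - 6, by omega⟩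
    have hsum := sum_innerConv_mul_le (n := k + 4) fun i hi ↦ ih i (by omega)
    have hT5 := ih (k + 5) (by omega)
    have hT4 := ih (k + 4) (by omega)
    have hg5 := hm.two_mul_add_five_mul_le (k + 4)
    have hg4 := hm.two_mul_add_five_mul_le (k + 3)
    rw [hm.innerConv_succ]
    nlinarith

theorem cast_succ (n : ℕ) : (m (n + 1) : ℝ) =
    (2 * n + 1) * m n + ∑ i ∈ range (n + 1), (m i : ℝ) * m (n - i) := by
  rw [hm.succ, show 2 * (n + 1) - 1 = 2 * n + 1 by omega]
  push_cast
  ring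

theorem two_mul_add_one_mul_prod_le (n : ℕ) :
    (2 * n + 1) * ∏ j ∈ range n, (2 * j + 1) ≤ 3 * m n := by
  induction n with
  | zero => simp [hm.zero]
  | succ n ih =>
    rcases n with _ | n
    · simp [hm.small_values.1]
    rw [prod_range_succ]
    calc (2 * (n + 1 + 1) + 1) * ((∏ j ∈ range (n + 1), (2 * j + 1)) * (2 * (n + 1) + 1))
        = (2 * n + 5) * ((2 * (n + 1) + 1) * ∏ j ∈ range (n + 1), (2 * j + 1)) := by ring
      _ ≤ (2 * n + 5) * (3 * m (n + 1)) := Nat.mul_le_mul_left _ ih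
      _ ≤ 3 * m (n + 2) := by nlinarith [hm.two_mul_add_five_mul_le n]

theorem tendsto_div_prod_atTop :
    Tendsto (fun n ↦ (m n : ℝ) / ∏ j ∈ range n, (2 * j + 1 : ℝ)) atTop atTop := by
  refine tendsto_atTop_mono (fun n ↦ ?_) <| tendsto_atTop_add_const_right _ (1 / 3) <|
    (tendsto_natCast_atTop_atTop (R := ℝ)).const_mul_atTop (by norm_num : (0 : ℝ) < 2 / 3)
  have hP : (0 : ℝ) < ∏ j ∈ range n, (2 * j + 1 : ℝ) := prod_pos fun j _ ↦ by positivity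
  have h : ((2 * n + 1) * ∏ j ∈ range n, (2 * j + 1) : ℝ) ≤ 3 * m n := by
    exact_mod_cast hm.two_mul_add_one_mul_prod_le n
  push_cast at h
  rw [le_div_iff₀ hP]
  linarith

theorem tendsto_innerConv_div :
    Tendsto (fun n ↦ (innerConv m n : ℝ) / m (n + 1)) atTop (𝓝 0) := by
  refine squeeze_zero (fun n ↦ by positivity) (fun n ↦ ?_)
    (mul_zero (10 : ℝ) ▸ (tendsto_one_div_add_atTop_nhds_zero_nat (𝕜 := ℝ)).const_mul 10)
  have hT : (innerConv m n : ℝ) ≤ 10 * m n := by exact_mod_cast hm.innerConv_le n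
  have hg : ((2 * n + 1) * m n : ℝ) ≤ m (n + 1) := by exact_mod_cast hm.two_mul_add_one_mul_le n
  have hm_pos : (0 : ℝ) < m n := by exact_mod_cast hm.pos n
  rw [div_le_iff₀ (by exact_mod_cast hm.pos (n + 1)), mul_one_div, div_mul_eq_mul_div,
    le_div_iff₀ (by positivity)]
  nlinarith

theorem tendsto_conv_div {d : ℕ → ℝ} {ℓ : ℝ} (hd_nonneg : ∀ n, 0 ≤ d n) (hd_le : ∀ n, d n ≤ m n)
    (hd : Tendsto (fun n ↦ d n / m n) atTop (𝓝 ℓ)) :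
    Tendsto (fun n ↦ (∑ i ∈ range (n + 1), m i * d (n - i)) / m n) atTop (𝓝 (ℓ + d 0)) := by
  set E : ℕ → ℝ := fun n ↦ (∑ i ∈ range n, m (i + 1) * d (n - i)) / m (n + 1)
  have hE : Tendsto E atTop (𝓝 0) := by
    refine squeeze_zero (fun n ↦ ?_) (fun n ↦ ?_) hm.tendsto_innerConv_div
    · exact div_nonneg (sum_nonneg fun i _ ↦ mul_nonneg (Nat.cast_nonneg _) (hd_nonneg _))
        (Nat.cast_nonneg _)
    · refine div_le_div_of_nonneg_right ?_ (Nat.cast_nonneg _)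
      rw [innerConv, Nat.cast_sum]
      exact sum_le_sum fun i _ ↦ by push_cast; gcongr; exact hd_le _
  have hlim := (((tendsto_add_atTop_iff_nat 1).2 hd).add_const (d 0)).add hE
  rw [add_zero] at hlim
  rw [← tendsto_add_atTop_iff_nat 1]
  refine hlim.congr fun n ↦ ?_
  have hm_pos : (0 : ℝ) < m (n + 1) := by exact_mod_cast hm.pos (n + 1)
  rw [sum_range_succ, sum_range_succ']
  simp only [E, Nat.sub_self, Nat.sub_zero, hm.zero, Nat.cast_one, one_mul, Nat.add_sub_add_right]
  field_simp
  ring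

end IsMapCount

structure IsRootIsthmicPoly (m : ℕ → ℕ) (c : ℕ → ℝ[X]) : Prop where
  zero : c 0 = 1
  succ : ∀ n, c (n + 1) = C (2 * ((n : ℝ) + 1) - 1) * c n +
    X * ∑ i ∈ range (n + 1), C (m i : ℝ) * c (n - i)

namespace IsRootIsthmicPoly

variable {m : ℕ → ℕ} {c : ℕ → ℝ[X]} (hc : IsRootIsthmicPoly m c)
include hc

theorem coeff_zero_eq_prod (n : ℕ) : (c n).coeff 0 = ∏ j ∈ range n, (2 * j + 1 : ℝ) := by
  induction n with
  | zero => simp [hc.zero]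
  | succ n ih =>
    rw [hc.succ, prod_range_succ, ← ih]
    simp only [coeff_add, mul_coeff_zero, coeff_C_zero, coeff_X_zero, zero_mul, add_zero]
    ring

theorem coeff_succ_succ (n k : ℕ) : (c (n + 1)).coeff (k + 1) =
    (2 * n + 1) * (c n).coeff (k + 1) + ∑ i ∈ range (n + 1), (m i : ℝ) * (c (n - i)).coeff k := by
  rw [hc.succ]
  simp only [coeff_add, coeff_C_mul, coeff_X_mul, finsetSum_coeff]
  ring

theorem coeff_nonneg (n k : ℕ) : 0 ≤ (c n).coeff k := by
  induction n using Nat.strong_induction_on generalizing k with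
  | _ n ih =>
    rcases n with _ | n
    · rw [hc.zero, coeff_one]
      positivity
    rcases k with _ | k
    · rw [hc.coeff_zero_eq_prod]
      positivity
    rw [hc.coeff_succ_succ]
    refine add_nonneg (mul_nonneg (by positivity) (ih n (by omega) _)) (sum_nonneg fun i hi ↦ ?_)
    exact mul_nonneg (Nat.cast_nonneg _) (ih _ (by have := mem_range.1 hi; omega) _)

variable (hm : IsMapCount m)
include hm

theorem eval_one (n : ℕ) : (c n).eval 1 = m n := by
  induction n using Nat.strong_induction_on with
  | _ n ih =>
    rcases n with _ | n
    · simp [hc.zero, hm.zero]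
    rw [hc.succ, hm.cast_succ]
    simp only [eval_add, eval_mul, eval_C, eval_X, eval_finsetSum, one_mul]
    rw [ih n (by omega), sum_congr rfl fun i hi ↦ by rw [ih (n - i) (by grind)]]
    ring

theorem coeff_le (n k : ℕ) : (c n).coeff k ≤ m n :=
  hc.eval_one hm n ▸ coeff_le_eval_one (hc.coeff_nonneg n) k

theorem tendsto_coeff_zero_div : Tendsto (fun n ↦ (c n).coeff 0 / m n) atTop (𝓝 0) := by
  refine squeeze_zero (fun n ↦ ?_) (fun n ↦ ?_)
    (mul_zero (3 : ℝ) ▸ (tendsto_one_div_add_atTop_nhds_zero_nat (𝕜 := ℝ)).const_mul 3)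
  · exact div_nonneg (hc.coeff_nonneg n 0) (Nat.cast_nonneg _)
  have h : ((2 * n + 1) * ∏ j ∈ range n, (2 * j + 1) : ℝ) ≤ 3 * m n := by
    exact_mod_cast hm.two_mul_add_one_mul_prod_le n
  push_cast at h
  have hm_pos : (0 : ℝ) < m n := by exact_mod_cast hm.pos n
  rw [hc.coeff_zero_eq_prod, div_le_iff₀ hm_pos, mul_one_div, div_mul_eq_mul_div,
    le_div_iff₀ (by positivity)]
  have : (0 : ℝ) ≤ ∏ j ∈ range n, (2 * j + 1 : ℝ) := by positivity
  nlinarith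

theorem tendsto_coeff_succ_div {k : ℕ} {ℓ : ℝ}
    (h : Tendsto (fun n ↦ (c n).coeff k / m n) atTop (𝓝 ℓ)) :
    Tendsto (fun n ↦ (c n).coeff (k + 1) / m n) atTop (𝓝 ((ℓ + if k = 0 then 1 else 0) / 2)) := by
  have hm_pos : ∀ n, (0 : ℝ) < m n := fun n ↦ by exact_mod_cast hm.pos n
  have hconv_m := hm.tendsto_conv_div (d := fun n ↦ (m n : ℝ)) (fun n ↦ (hm_pos n).le)
    (fun n ↦ le_rfl) (tendsto_const_nhds.congr fun n ↦ (div_self (hm_pos n).ne').symm)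
  have hconv_c := hm.tendsto_conv_div (hc.coeff_nonneg · k) (hc.coeff_le hm · k) h
  rw [hm.zero, Nat.cast_one, one_add_one_eq_two] at hconv_m
  rw [hc.zero, coeff_one] at hconv_c
  have hconv_pos : ∀ n, 0 < ∑ i ∈ range (n + 1), (m i : ℝ) * m (n - i) := fun n ↦
    sum_pos (fun i _ ↦ mul_pos (hm_pos i) (hm_pos (n - i))) nonempty_range_add_one
  refine tendsto_div_of_linear_recurrence (fun n : ℕ ↦ by positivity : ∀ n : ℕ, (0 : ℝ) < 2 * n + 1)
    (hc.coeff_succ_succ · k) hm.cast_succ hconv_pos hm.tendsto_div_prod_atTop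
    ((hconv_c.div hconv_m two_ne_zero).congr fun n ↦ ?_)
  exact div_div_div_cancel_right₀ (hm_pos n).ne' _ _

end IsRootIsthmicPoly

theorem root_isthmic_parts_geometric
    (m : ℕ → ℕ) (hm0 : m 0 = 1)
    (hm : ∀ n : ℕ, m (n + 1) =
      (∑ k ∈ Finset.range (n + 1), m k * m (n - k)) + (2 * (n + 1) - 1) * m n)
    (c : ℕ → Polynomial ℝ) (hc0 : c 0 = 1)
    (hc : ∀ n : ℕ, c (n + 1) =
      C (2 * ((n : ℝ) + 1) - 1) * c n +
        X * ∑ i ∈ Finset.range (n + 1), C ((m i : ℝ)) * c (n - i)) :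
    (∀ k : ℕ, 1 ≤ k →
        Tendsto (fun n : ℕ => (c n).coeff k / (m n : ℝ)) atTop
          (nhds ((2 : ℝ) ^ (-(k : ℤ))))) ∧
      Tendsto (fun n : ℕ => (c n).coeff 0 / (m n : ℝ)) atTop (nhds 0) := by
  have hM : IsMapCount m := ⟨hm0, hm⟩
  have hC : IsRootIsthmicPoly m c := ⟨hc0, hc⟩
  have hlim : ∀ k : ℕ, Tendsto (fun n ↦ (c n).coeff (k + 1) / m n) atTop
      (𝓝 ((2 ^ (k + 1))⁻¹)) := by
    intro k
    induction k with
    | zero => simpa using hC.tendsto_coeff_succ_div hM (hC.tendsto_coeff_zero_div hM)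
    | succ k ih =>
      convert hC.tendsto_coeff_succ_div hM ih using 2
      rw [if_neg k.succ_ne_zero, pow_succ]
      ring
  refine ⟨fun k hk ↦ ?_, hC.tendsto_coeff_zero_div hM⟩
  obtain ⟨k, rfl⟩ := Nat.exists_eq_add_of_le' hk
  simpa only [zpow_neg, zpow_natCast] using hlim k
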